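/- The ideal I_n of R coincides with the ideal generated by the polynomials f_0, f_1, …, f_{t−1}. -/
import Mathlib


open MvPolynomial Finset

noncomputable section

/-- `R2 = (ℤ/2)[w₂, w₃]`, the polynomial ring in two variables over `ℤ/2ℤ`. -/
abbrev R2 : Type := MvPolynomial (Fin 2) (ZMod 2)

/-- The variable `w₂`. -/
def w2 : R2 := X 0

/-- The variable `w₃`. -/
def w3 : R2 := X 1

/-- The polynomials `g_r`: `g₀ = 1`, `g₁ = 0`, `g₂ = w₂`,
`g_{r+3} = w₂ g_{r+1} + w₃ g_r`. -/
def g : ℕ → R2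
  | 0 => 1
  | 1 => 0
  | 2 => w2
  | (r+3) => w2 * g (r+1) + w3 * g r

/-- The ideal `I_n = (g_{n-2}, g_{n-1}, g_n)`. -/
def I (n : ℕ) : Ideal R2 := Ideal.span {g (n-2), g (n-1), g n}

/-- `alpha N j` is the `j`-th binary digit of `N`. -/
def alpha (N j : ℕ) : ℕ := if N.testBit j then 1 else 0

/-- `sPart N i = Σ_{j=0}^{i-1} α_j 2^j` (so the paper's `s_i` is `sPart N (i+1)`,
and `s_{i-1}` is `sPart N i`; in particular `s_{-1} = sPart N 0 = 0`).  Here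
`N = n - 2^t + 1`. -/
def sPart (N i : ℕ) : ℕ := ∑ j ∈ Finset.range i, alpha N j * 2^j

/-- The polynomial `f_i = w₃^{α_i s_{i-1}} g_{n-2+2^i-s_i}`. -/
def f (n t i : ℕ) : R2 :=
  w3 ^ (alpha (n+1-2^t) i * sPart (n+1-2^t) i) * g (n - 2 + 2^i - sPart (n+1-2^t) (i+1))

/-! ### Auxiliary lemmas -/

lemma two_eq_zero : (2 : R2) = 0 := by
  have h : (2 : ZMod 2) = 0 := rfl
  calc (2:R2) = MvPolynomial.C (2 : ZMod 2) := (map_ofNat _ 2).symm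
    _ = 0 := by rw [h, map_zero]

lemma g_zero : g 0 = 1 := rfl
lemma g_one : g 1 = 0 := rfl
lemma g_two : g 2 = w2 := rfl
lemma g_add3 (r : ℕ) : g (r+3) = w2 * g (r+1) + w3 * g r := rfl

lemma g_add6 (r : ℕ) : g (r+6) = w2^2 * g (r+2) + w3^2 * g r := by
  have h1 : g (r+6) = w2 * g (r+4) + w3 * g (r+3) := g_add3 (r+3)
  have h2 : g (r+4) = w2 * g (r+2) + w3 * g (r+1) := g_add3 (r+1)
  have h3 : g (r+3) = w2 * g (r+1) + w3 * g r := g_add3 r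
  rw [h1, h2, h3]
  linear_combination (w2 * w3 * g (r+1)) * two_eq_zero

lemma g_three : g 3 = w3 := by
  rw [show (3:ℕ) = 0+3 from rfl, g_add3, g_one, g_zero]; ring

lemma g_four : g 4 = w2^2 := by
  rw [show (4:ℕ) = 1+3 from rfl, g_add3, show (1+1:ℕ) = 2 from rfl, g_two, g_one]; ring

lemma g_five : g 5 = 0 := by
  rw [show (5:ℕ) = 2+3 from rfl, g_add3, show (2+1:ℕ) = 3 from rfl, g_three, g_two]
  linear_combination (w2 * w3) * two_eq_zero

lemma g_seven : g 7 = w3 * w2^2 := by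
  rw [show (7:ℕ) = 4+3 from rfl, g_add3, show (4+1:ℕ) = 5 from rfl, g_five, g_four]; ring

lemma g_odd (v : ℕ) : g (2*v+3) = w3 * g v ^ 2 := by
  have H : ∀ v, (g (2*v+3) = w3 * g v ^ 2) ∧ (g (2*(v+1)+3) = w3 * g (v+1) ^ 2) ∧
      (g (2*(v+2)+3) = w3 * g (v+2) ^ 2) := by
    intro v
    induction v with
    | zero =>
      refine ⟨?_, ?_, ?_⟩
      · rw [show 2*0+3 = 3 from rfl, g_three, g_zero]; ring
      · rw [show 2*(0+1)+3 = 5 from rfl, g_five, show (0+1:ℕ) = 1 from rfl, g_one]; ring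
      · rw [show 2*(0+2)+3 = 7 from rfl, g_seven, show (0+2:ℕ) = 2 from rfl, g_two]
    | succ u ih =>
      refine ⟨ih.2.1, ih.2.2, ?_⟩
      rw [show 2*(u+1+2)+3 = (2*u+3)+6 by ring, g_add6,
        show (2*u+3)+2 = 2*(u+1)+3 by ring, ih.1, ih.2.1,
        show u+1+2 = u+3 by ring, g_add3 u]
      linear_combination (-(w3 * w2 * w3 * g (u+1) * g u)) * two_eq_zero
  exact (H v).1

lemma g_pow2 : ∀ k, 2 ≤ k → g (2^k - 3) = 0 := by
  intro k
  induction k with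
  | zero => intro h; omega
  | succ k ih =>
    intro h
    rcases Nat.lt_or_ge k 2 with hk | hk
    · have hk1 : k = 1 := by omega
      subst hk1
      rw [show 2^2 - 3 = 1 by norm_num]; exact g_one
    · have h4 : 4 ≤ 2^k := by
        calc (4:ℕ) = 2^2 := rfl
        _ ≤ 2^k := Nat.pow_le_pow_right (by norm_num) hk
      have h2 : 2^(k+1) = 2*2^k := by ring
      rw [show 2^(k+1) - 3 = 2*(2^k - 3) + 3 by omega, g_odd, ih hk]
      ring

lemma g_mem {n : ℕ} (hn : 2 ≤ n) : ∀ m, n - 2 ≤ m → g m ∈ I n := by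
  intro m
  induction m using Nat.strong_induction_on with
  | _ m ih =>
    intro hm
    rcases Nat.lt_or_ge n m with h | h
    · obtain ⟨r, rfl⟩ : ∃ r, m = r+3 := ⟨m-3, by omega⟩
      rw [g_add3]
      exact add_mem (Ideal.mul_mem_left _ _ (ih (r+1) (by omega) (by omega)))
        (Ideal.mul_mem_left _ _ (ih r (by omega) (by omega)))
    · have hcases : m = n-2 ∨ m = n-1 ∨ m = n := by omega
      rcases hcases with rfl | rfl | rfl
      · exact Ideal.subset_span (by simp)
      · exact Ideal.subset_span (by simp)
      · exact Ideal.subset_span (by simp)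

lemma w3_g_mem {n : ℕ} (hn : 2 ≤ n) : ∀ k m, n - 2 ≤ m + k → w3^k * g m ∈ I n := by
  intro k
  induction k with
  | zero =>
    intro m hm
    simpa using g_mem hn m (by omega)
  | succ k ih =>
    intro m hm
    have h : w3^(k+1) * g m = w3^k * g (m+3) + w2 * (w3^k * g (m+1)) := by
      rw [g_add3]
      linear_combination (-(w2 * w3^k * g (m+1))) * two_eq_zero
    rw [h]
    exact add_mem (ih _ (by omega)) (Ideal.mul_mem_left _ _ (ih _ (by omega)))

lemma sPart_zero (N : ℕ) : sPart N 0 = 0 := by simp [sPart]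

lemma sPart_succ (N i : ℕ) : sPart N (i+1) = sPart N i + alpha N i * 2^i :=
  Finset.sum_range_succ _ _

lemma alpha_le_one (N i : ℕ) : alpha N i ≤ 1 := by
  unfold alpha; split <;> norm_num

lemma sPart_lt (N i : ℕ) : sPart N i < 2^i := by
  induction i with
  | zero => simp [sPart_zero]
  | succ i ih =>
    rw [sPart_succ]
    have h := alpha_le_one N i
    have h2 : 2^(i+1) = 2*2^i := by ring
    rcases Nat.le_one_iff_eq_zero_or_eq_one.mp h with h1 | h1 <;> rw [h1] <;> omega

lemma sPart_eq_mod (N i : ℕ) : sPart N i = N % 2^i := by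
  induction i with
  | zero => simp [sPart_zero, Nat.mod_one]
  | succ i ih =>
    rw [sPart_succ, ih, pow_succ, Nat.mod_mul]
    have ha : alpha N i = N / 2^i % 2 := by
      unfold alpha
      rw [Nat.testBit_eq_decide_div_mod_eq]
      have := Nat.mod_lt (N / 2^i) (show 0 < 2 by norm_num)
      split <;> rename_i hb <;> simp at hb <;> omega
    rw [ha]; ring

lemma sPart_le (N i : ℕ) : sPart N i ≤ N := by
  rw [sPart_eq_mod]; exact Nat.mod_le _ _

/-- The intermediate generating sets. -/
def Jset (n t i : ℕ) : Set R2 :=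
  {p | ∃ j < i, p = f n t j} ∪
    {w3 ^ sPart (n+1-2^t) i * g (n - 2 - sPart (n+1-2^t) i),
     g (n - 2 + 2^i - sPart (n+1-2^t) i)}

lemma f_mem (n t j : ℕ) (hn : 7 ≤ n) (ht : 3 ≤ t) (h1 : 2 ^ t - 1 ≤ n) : f n t j ∈ I n := by
  have h8 : (8:ℕ) ≤ 2^t := by
    calc (8:ℕ) = 2^3 := rfl
    _ ≤ 2^t := Nat.pow_le_pow_right (by norm_num) ht
  have hNle : n + 1 - 2^t ≤ n - 7 := by omega
  have hs1 : sPart (n+1-2^t) j ≤ n+1-2^t := sPart_le _ _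
  have hs2 : sPart (n+1-2^t) j < 2^j := sPart_lt _ _
  have hss : sPart (n+1-2^t) (j+1) = sPart (n+1-2^t) j + alpha (n+1-2^t) j * 2^j :=
    sPart_succ _ _
  have hal := alpha_le_one (n+1-2^t) j
  unfold f
  apply w3_g_mem (by omega)
  rcases Nat.le_one_iff_eq_zero_or_eq_one.mp hal with h | h
  · rw [h, zero_mul, add_zero] at hss
    rw [h, zero_mul]
    omega
  · rw [h, one_mul] at hss ⊢
    omega

lemma Jset_mono (n t i : ℕ) (hn : 7 ≤ n) (ht : 3 ≤ t) (h1 : 2 ^ t - 1 ≤ n) :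
    Jset n t i ⊆ Jset n t (i+1) := by
  have h8 : (8:ℕ) ≤ 2^t := by
    calc (8:ℕ) = 2^3 := rfl
    _ ≤ 2^t := Nat.pow_le_pow_right (by norm_num) ht
  have hNle : n + 1 - 2^t ≤ n - 7 := by omega
  have hs1 : sPart (n+1-2^t) i ≤ n+1-2^t := sPart_le _ _
  have hs2 : sPart (n+1-2^t) i < 2^i := sPart_lt _ _
  have hss : sPart (n+1-2^t) (i+1) = sPart (n+1-2^t) i + alpha (n+1-2^t) i * 2^i :=
    sPart_succ _ _
  have hal := alpha_le_one (n+1-2^t) i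
  have hp : (2:ℕ)^(i+1) = 2*2^i := by ring
  intro p hp'
  rcases Nat.le_one_iff_eq_zero_or_eq_one.mp hal with h | h
  · -- alpha = 0 : σ_{i+1} = σ_i
    have hσ : sPart (n+1-2^t) (i+1) = sPart (n+1-2^t) i := by
      rw [hss, h, zero_mul, add_zero]
    rcases hp' with ⟨j, hj, rfl⟩ | hA
    · exact Or.inl ⟨j, by omega, rfl⟩
    rcases hA with rfl | rfl
    · -- A_i = A_{i+1}
      right; left; rw [hσ]
    · -- B_i = f_i
      left
      refine ⟨i, by omega, ?_⟩
      unfold f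
      rw [h, zero_mul, pow_zero, one_mul, hσ]
  · -- alpha = 1 : σ_{i+1} = σ_i + 2^i
    have hσ : sPart (n+1-2^t) (i+1) = sPart (n+1-2^t) i + 2^i := by
      rw [hss, h, one_mul]
    rcases hp' with ⟨j, hj, rfl⟩ | hA
    · exact Or.inl ⟨j, by omega, rfl⟩
    rcases hA with rfl | rfl
    · -- A_i = f_i
      left
      refine ⟨i, by omega, ?_⟩
      unfold f
      rw [h, one_mul, hσ, show n - 2 + 2^i - (sPart (n+1-2^t) i + 2^i) =
        n - 2 - sPart (n+1-2^t) i by omega]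
    · -- B_i = B_{i+1}
      right; right
      rw [hσ, show n - 2 + 2^(i+1) - (sPart (n+1-2^t) i + 2^i) =
        n - 2 + 2^i - sPart (n+1-2^t) i by omega]
      exact Set.mem_singleton _

/-- Proposition 3.7: `I_n` is generated by `f_0, f_1, …, f_{t-1}`. -/
theorem I_eq_span_f (n t : ℕ) (hn : 7 ≤ n) (ht : 3 ≤ t)
    (h1 : 2 ^ t - 1 ≤ n) (h2 : n < 2 ^ (t + 1) - 1) :
    I n = Ideal.span {p : R2 | ∃ i < t, p = f n t i} := by
  have h8 : (8:ℕ) ≤ 2^t := by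
    calc (8:ℕ) = 2^3 := rfl
    _ ≤ 2^t := Nat.pow_le_pow_right (by norm_num) ht
  have hp : (2:ℕ)^(t+1) = 2*2^t := by ring
  have hNle : n + 1 - 2^t ≤ n - 7 := by omega
  have hNlt : n + 1 - 2^t < 2^t := by omega
  -- Step 1: I n ≤ span (Jset n t 1)
  have base : I n ≤ Ideal.span (Jset n t 1) := by
    have hs01 : sPart (n+1-2^t) 1 = alpha (n+1-2^t) 0 := by
      rw [sPart_succ, sPart_zero]; ring
    have hal := alpha_le_one (n+1-2^t) 0
    have hf0 : f n t 0 = g (n - 2 + 2^0 - sPart (n+1-2^t) 1) := by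
      unfold f
      rw [sPart_zero, Nat.mul_zero, pow_zero, one_mul]
    rw [I, Ideal.span_le]
    rcases Nat.le_one_iff_eq_zero_or_eq_one.mp hal with h | h
    · -- α₀ = 0 : J₁ = {f 0 = g (n-1)} ∪ {g (n-2), g n}
      have hσ : sPart (n+1-2^t) 1 = 0 := by omega
      intro p hp'
      rcases hp' with rfl | hp'
      · -- g (n-2)
        apply Ideal.subset_span
        right; left
        rw [hσ]; simp
      rcases hp' with rfl | rfl
      · -- g (n-1) = f 0
        apply Ideal.subset_span
        left
        refine ⟨0, by omega, ?_⟩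
        rw [hf0, hσ, show n - 2 + 2^0 - 0 = n - 1 by simp; omega]
      · -- g n
        apply Ideal.subset_span
        right; right
        rw [hσ, show n - 2 + 2^1 - 0 = n by omega]
        exact Set.mem_singleton _
    · -- α₀ = 1 : J₁ = {f 0 = g (n-2)} ∪ {w3 * g (n-3), g (n-1)}
      have hσ : sPart (n+1-2^t) 1 = 1 := by omega
      have hf0' : f n t 0 = g (n-2) := by
        rw [hf0, hσ, show n - 2 + 2^0 - 1 = n - 2 by simp]
      intro p hp'
      rcases hp' with rfl | hp'
      · -- g (n-2) = f 0
        exact Ideal.subset_span (Or.inl ⟨0, by omega, hf0'.symm⟩)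
      rcases hp' with rfl | rfl
      · -- g (n-1)
        apply Ideal.subset_span
        right; right
        rw [hσ, show n - 2 + 2^1 - 1 = n - 1 by omega]
        exact Set.mem_singleton _
      · -- g n = w2 * f 0 + w3^1 * g (n-3)
        have hgn : g n = w2 * f n t 0 + w3 ^ sPart (n+1-2^t) 1 * g (n - 2 - sPart (n+1-2^t) 1) := by
          rw [hf0', hσ, pow_one]
          have e : g ((n-3)+3) = w2 * g ((n-3)+1) + w3 * g (n-3) := g_add3 (n-3)
          rw [show (n-3)+3 = n by omega, show (n-3)+1 = n-2 by omega] at e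
          rw [e, show n - 2 - 1 = n - 3 by omega]
        rw [hgn]
        exact add_mem (Ideal.mul_mem_left _ _ (Ideal.subset_span (Or.inl ⟨0, by omega, rfl⟩)))
          (Ideal.subset_span (Or.inr (Or.inl rfl)))
  -- Step 2: chain up to t
  have key : ∀ i, I n ≤ Ideal.span (Jset n t (i+1)) := by
    intro i
    induction i with
    | zero => exact base
    | succ i ih =>
      exact le_trans ih (Ideal.span_mono (Jset_mono n t (i+1) hn ht h1))
  -- Step 3: at level t the two extra generators vanish
  obtain ⟨t', rfl⟩ : ∃ t', t = t'+1 := ⟨t-1, by omega⟩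
  have hkey := key t'
  apply le_antisymm
  · refine le_trans hkey ?_
    rw [Ideal.span_le]
    intro p hp'
    have hσt : sPart (n+1-2^(t'+1)) (t'+1) = n+1-2^(t'+1) := by
      rw [sPart_eq_mod]; exact Nat.mod_eq_of_lt hNlt
    rcases hp' with ⟨j, hj, rfl⟩ | hA
    · exact Ideal.subset_span ⟨j, hj, rfl⟩
    rcases hA with rfl | rfl
    · rw [hσt, show n - 2 - (n+1-2^(t'+1)) = 2^(t'+1) - 3 by omega,
        g_pow2 (t'+1) (by omega), mul_zero]
      exact zero_mem _
    · rw [hσt, show n - 2 + 2^(t'+1) - (n+1-2^(t'+1)) = 2^(t'+1+1) - 3 by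
        have : (2:ℕ)^(t'+1+1) = 2*2^(t'+1) := by ring
        omega, g_pow2 (t'+1+1) (by omega)]
      exact zero_mem _
  · rw [Ideal.span_le]
    rintro p ⟨j, hj, rfl⟩
    exact f_mem n (t'+1) j hn ht h1

end
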